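/- arXiv:1112.5710 — 6 statements merged into one kernel-verified Lean document; each statement's English description precedes it below -/
import Mathlib

section
/- Let B be a Boolean algebra, {N_b : b ∈ B⁺} an independent family of subsets of ℕ (i.e., for any finite disjoint s, t ⊆ B⁺, the set ⋂_{b∈s} N_b \ ⋃_{b'∈t} N_{b'} is nonempty). In the countable product algebra C = B^ℕ define G_b(n) = b if n ∈ N_b and G_b(n) = 0 otherwise. For finite s, t ⊆ B⁺ let W(s,t) = ⋂_{b∈s} G_b \ ⋃_{b'∈t} G_{b'}. Then W(s,t) = 0 in C if and only if s ∩ t ≠ ∅ or ⋂_{b∈s} b = 0 in B. -/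
/-!
`W(s, t)` vanishes at a coordinate `n` only if `⋂_{b ∈ s} G_b(n) ≤ ⋃_{b ∈ t} G_b(n)`.
A common element of `s` and `t` forces this everywhere, and so does `⋂_{b∈s} b = 0`, since
`G_b ≤ b` coordinatewise. Conversely, when `s` and `t` are disjoint, independence provides an
`n` lying in every `N_b` with `b ∈ s` and in no `N_b` with `b ∈ t`; there `W(s, t)(n) = ⋂_{b∈s} b`.
-/

theorem Finset.inf_sdiff_sup_eq_bot_of_nonempty_inter {ι α : Type*} [DecidableEq ι]
    [BooleanAlgebra α] (f : ι → α) {s t : Finset ι} (hst : (s ∩ t).Nonempty) :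
    s.inf f \ t.sup f = ⊥ := by
  obtain ⟨i, hi⟩ := hst
  rw [Finset.mem_inter] at hi
  exact sdiff_eq_bot_iff.mpr ((Finset.inf_le hi.1).trans (Finset.le_sup hi.2))

section Indicator

variable {B : Type*} [BooleanAlgebra B] {N : B → Set ℕ} {G : B → ℕ → B}

theorem apply_le_of_indicator (hG : ∀ b n, (n ∈ N b → G b n = b) ∧ (n ∉ N b → G b n = ⊥))
    (b : B) (n : ℕ) : G b n ≤ b := by
  by_cases hn : n ∈ N b
  · exact ((hG b n).1 hn).le
  · exact ((hG b n).2 hn).symm ▸ bot_le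

theorem inf_eq_bot_of_indicator (hG : ∀ b n, (n ∈ N b → G b n = b) ∧ (n ∉ N b → G b n = ⊥))
    {s : Finset B} (hs : s.inf id = ⊥) : s.inf G = ⊥ := by
  funext n
  rw [Finset.inf_apply, Pi.bot_apply, ← le_bot_iff, ← hs]
  exact Finset.inf_mono_fun fun b _ => apply_le_of_indicator hG b n

theorem inf_sdiff_sup_apply_of_indicator
    (hG : ∀ b n, (n ∈ N b → G b n = b) ∧ (n ∉ N b → G b n = ⊥)) {s t : Finset B} {n : ℕ}
    (hns : ∀ b ∈ s, n ∈ N b) (hnt : ∀ b ∈ t, n ∉ N b) :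
    (s.inf G \ t.sup G) n = s.inf id := by
  have hinf : s.inf G n = s.inf id := by
    rw [Finset.inf_apply]
    exact Finset.inf_congr rfl fun b hb => (hG b n).1 (hns b hb)
  have hsup : t.sup G n = ⊥ := by
    rw [Finset.sup_apply]
    exact Finset.sup_eq_bot_iff _ _ |>.mpr fun b hb => (hG b n).2 (hnt b hb)
  rw [Pi.sdiff_apply, hinf, hsup, sdiff_bot]

end Indicator

/-- In the product Boolean algebra `C = B^ℕ`, with `G b n = b` if `n ∈ N b`
and `⊥` otherwise (for an independent family `N` of subsets of `ℕ` indexed by nonzero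
elements of `B`), and `W s t = (⋂_{b∈s} G b) \ (⋃_{b∈t} G b)`, we have `W s t = ⊥`
iff `s ∩ t ≠ ∅` or `⋂_{b∈s} b = ⊥`. -/
theorem stmt_0 {B : Type*} [BooleanAlgebra B] [DecidableEq B]
    (N : B → Set ℕ)
    (hindep : ∀ s t : Finset B, (↑s : Set B) ⊆ {b | b ≠ ⊥} → (↑t : Set B) ⊆ {b | b ≠ ⊥} →
      Disjoint s t → ∃ n : ℕ, (∀ b ∈ s, n ∈ N b) ∧ (∀ b ∈ t, n ∉ N b))
    (G : B → (ℕ → B))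
    (hG : ∀ b n, (n ∈ N b → G b n = b) ∧ (n ∉ N b → G b n = ⊥))
    (s t : Finset B) (hs : (↑s : Set B) ⊆ {b | b ≠ ⊥}) (ht : (↑t : Set B) ⊆ {b | b ≠ ⊥}) :
    (s.inf G \ t.sup G = (⊥ : ℕ → B)) ↔ ((s ∩ t).Nonempty ∨ s.inf id = ⊥) := by
  constructor
  · intro hW
    by_contra! hst
    obtain ⟨hdisj, hinf⟩ := hst
    obtain ⟨n, hns, hnt⟩ := hindep s t hs ht (Finset.disjoint_iff_inter_eq_empty.mpr hdisj)
    exact hinf (by rw [← inf_sdiff_sup_apply_of_indicator hG hns hnt, hW, Pi.bot_apply])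
  · rintro (hst | hinf)
    · exact Finset.inf_sdiff_sup_eq_bot_of_nonempty_inter G hst
    · rw [inf_eq_bot_of_indicator hG hinf, bot_sdiff]
end

section
/- With the notation of the previous setting (G_b ∈ B^ℕ defined from an independent family {N_b : b ∈ B⁺}), for a finite set s ⊆ B⁺ the following are equivalent: (1) ⋂_{b∈s} b = 0; (2) J(s) := ⋂_{b∈s} G_b = 0; (3) W(s,t) = 0 for all finite t ⊆ B⁺ \ s; (4) W(s,t) = 0 for some finite t ⊆ B⁺ \ s. -/
/-! Every coordinate of `G b` lies below `b`, so `J(s) ≤ ⋂ s` coordinatewise and (1) ⇒ (2) ⇒ (3) ⇒ (4).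
Conversely, independence of the family `N` gives a coordinate `n` lying in every `N b` with `b ∈ s`
and in no `N b` with `b ∈ t`; there `W(s,t)` takes the value `⋂ s`, so (4) ⇒ (1). -/

section

variable {ι α : Type*}

lemma Finset.inf_apply_le_inf_id [SemilatticeInf α] [OrderTop α] {s : Finset α}
    {G : α → ι → α} (hG : ∀ b ∈ s, ∀ n, G b n ≤ b) (n : ι) : s.inf G n ≤ s.inf id := by
  rw [Finset.inf_apply]
  exact Finset.inf_mono_fun fun b hb => hG b hb n

lemma Finset.inf_sdiff_sup_apply_eq_inf_id [BooleanAlgebra α] {s t : Finset α}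
    {G : α → ι → α} {n : ι} (hs : ∀ b ∈ s, G b n = b) (ht : ∀ b ∈ t, G b n = ⊥) :
    (s.inf G \ t.sup G) n = s.inf id := by
  have hinf : s.inf G n = s.inf id := by
    rw [Finset.inf_apply]
    exact Finset.inf_congr rfl hs
  have hsup : t.sup G n = ⊥ := by
    rw [Finset.sup_apply]
    exact Finset.sup_eq_bot_iff _ _ |>.mpr ht
  rw [Pi.sdiff_apply, hinf, hsup, sdiff_bot]

end

/-- With `G b ∈ B^ℕ` defined from an independent family `{N b : b ≠ ⊥}`,
for a finite `s ⊆ B⁺` the following are equivalent: (1) `⋂_{b∈s} b = ⊥`;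
(2) `J(s) = ⋂_{b∈s} G b = ⊥`; (3) `W(s,t) = ⊥` for all finite `t ⊆ B⁺ \ s`;
(4) `W(s,t) = ⊥` for some finite `t ⊆ B⁺ \ s`. -/
theorem stmt_1 {B : Type*} [BooleanAlgebra B]
    (N : B → Set ℕ)
    (hindep : ∀ s t : Finset B, (↑s : Set B) ⊆ {b | b ≠ ⊥} → (↑t : Set B) ⊆ {b | b ≠ ⊥} →
      Disjoint s t → ∃ n : ℕ, (∀ b ∈ s, n ∈ N b) ∧ (∀ b ∈ t, n ∉ N b))
    (G : B → (ℕ → B))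
    (hG : ∀ b n, (n ∈ N b → G b n = b) ∧ (n ∉ N b → G b n = ⊥))
    (s : Finset B) (hs : (↑s : Set B) ⊆ {b | b ≠ ⊥}) :
    List.TFAE
      [ s.inf id = ⊥,
        s.inf G = (⊥ : ℕ → B),
        ∀ t : Finset B, (↑t : Set B) ⊆ {b | b ≠ ⊥} \ ↑s →
          s.inf G \ t.sup G = (⊥ : ℕ → B),
        ∃ t : Finset B, (↑t : Set B) ⊆ {b | b ≠ ⊥} \ ↑s ∧
          s.inf G \ t.sup G = (⊥ : ℕ → B) ] := by
  have hG_le : ∀ b ∈ s, ∀ n, G b n ≤ b := fun b _ n => by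
    by_cases hn : n ∈ N b
    · exact ((hG b n).1 hn).le
    · exact (hG b n).2 hn ▸ bot_le
  tfae_have 1 → 2 := fun h => funext fun n =>
    le_bot_iff.mp (h ▸ Finset.inf_apply_le_inf_id hG_le n)
  tfae_have 2 → 3 := fun h t _ => by rw [h, bot_sdiff]
  tfae_have 3 → 4 := fun h => ⟨∅, by simp, h ∅ (by simp)⟩
  tfae_have 4 → 1 := by
    rintro ⟨t, ht, hW⟩
    have hdisj : Disjoint s t := Finset.disjoint_right.mpr fun _ hb => (ht hb).2
    obtain ⟨n, hn_s, hn_t⟩ := hindep s t hs (fun b hb => (ht hb).1) hdisj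
    rw [← Finset.inf_sdiff_sup_apply_eq_inf_id (fun b hb => (hG b n).1 (hn_s b hb))
      (fun b hb => (hG b n).2 (hn_t b hb)), hW, Pi.bot_apply]
  tfae_finish
end

section
/- Every finitely additive probability measure on a subalgebra A of a Boolean algebra B extends to a finitely additive probability measure on B. -/
/-!
Łoś–Marczewski extension. If `m` is a probability on a subalgebra `S` and `b` is any element,
let `m*` be the outer measure `m* x = inf {m t | t ∈ S, x ≤ t}`. On the subalgebra generated by
`S` and `b`, whose elements are `(s ⊓ b) ⊔ (t ⊓ bᶜ)` with `s, t ∈ S`, the function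
`x ↦ m* (x ⊓ b) + m* (x ⊔ b) - m* b` is a probability extending `m`. Iterating, `m` extends to the
subalgebra generated by `S` and any finite set. Clipped to `[0, 1]`, these extensions form a net,
indexed by finite sets, in the compact cube `[0, 1]^B`; any cluster point is a probability on
all of `B` extending `m`, because each defining condition involves finitely many coordinates and
is closed.
-/

section

variable {B : Type*} [BooleanAlgebra B]

def IsAdditiveOn (S : BooleanSubalgebra B) (f : B → ℝ) : Prop :=
  ∀ x ∈ S, ∀ y ∈ S, Disjoint x y → f (x ⊔ y) = f x + f y

def IsModularOn (S : BooleanSubalgebra B) (f : B → ℝ) : Prop :=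
  ∀ x ∈ S, ∀ y ∈ S, f (x ⊔ y) + f (x ⊓ y) = f x + f y

structure IsProbOn (S : BooleanSubalgebra B) (m : B → ℝ) : Prop where
  nonneg : ∀ x ∈ S, 0 ≤ m x
  map_top : m ⊤ = 1
  additive : IsAdditiveOn S m

variable {S : BooleanSubalgebra B} {f g m : B → ℝ} {b s t u v x y : B}

namespace IsAdditiveOn

lemma map_bot (hf : IsAdditiveOn S f) : f ⊥ = 0 := by
  have := hf ⊥ S.bot_mem ⊥ S.bot_mem disjoint_bot_left
  rw [bot_sup_eq] at this
  linarith

lemma map_inf_add_map_sdiff (hf : IsAdditiveOn S f) (hx : x ∈ S) (hy : y ∈ S) :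
    f (x ⊓ y) + f (x \ y) = f x := by
  rw [← hf _ (S.inf_mem hx hy) _ (S.sdiff_mem hx hy) disjoint_inf_sdiff, sup_inf_sdiff]

lemma isModularOn (hf : IsAdditiveOn S f) : IsModularOn S f := fun x hx y hy => by
  have hsup : f (x ⊔ y) = f x + f (y \ x) := by
    rw [← sup_sdiff_self_right, hf x hx _ (S.sdiff_mem hy hx) disjoint_sdiff_self_right]
  have hy := hf.map_inf_add_map_sdiff hy hx
  rw [inf_comm] at hy
  linarith

lemma sub (hf : IsAdditiveOn S f) (hg : IsAdditiveOn S g) : IsAdditiveOn S (f - g) :=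
  fun x hx y hy hxy => by
    simp only [Pi.sub_apply, hf x hx y hy hxy, hg x hx y hy hxy]
    ring

end IsAdditiveOn

lemma IsModularOn.isAdditiveOn (hf : IsModularOn S f) (hf₀ : f ⊥ = 0) : IsAdditiveOn S f :=
  fun x hx y hy hxy => by
    have := hf x hx y hy
    rw [hxy.eq_bot, hf₀] at this
    linarith

namespace IsProbOn

lemma map_bot (h : IsProbOn S m) : m ⊥ = 0 := h.additive.map_bot

lemma mono (h : IsProbOn S m) (hx : x ∈ S) (hy : y ∈ S) (hxy : x ≤ y) : m x ≤ m y := by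
  rw [← h.additive.map_inf_add_map_sdiff hy hx, inf_eq_right.2 hxy]
  linarith [h.nonneg _ (S.sdiff_mem hy hx)]

lemma le_one (h : IsProbOn S m) (hx : x ∈ S) : m x ≤ 1 :=
  h.map_top ▸ h.mono hx S.top_mem le_top

lemma map_sup_le (h : IsProbOn S m) (hx : x ∈ S) (hy : y ∈ S) : m (x ⊔ y) ≤ m x + m y := by
  linarith [h.additive.isModularOn x hx y hy, h.nonneg _ (S.inf_mem hx hy)]

end IsProbOn

instance (S : BooleanSubalgebra B) (x : B) : Nonempty {t // t ∈ S ∧ x ≤ t} :=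
  ⟨⟨⊤, S.top_mem, le_top⟩⟩

noncomputable def outerProb (S : BooleanSubalgebra B) (m : B → ℝ) (x : B) : ℝ :=
  ⨅ t : {t // t ∈ S ∧ x ≤ t}, m t

lemma le_outerProb {c : ℝ} (hc : ∀ t ∈ S, x ≤ t → c ≤ m t) : c ≤ outerProb S m x :=
  le_ciInf fun t => hc t t.2.1 t.2.2

namespace IsProbOn

lemma outerProb_le (h : IsProbOn S m) (ht : t ∈ S) (hxt : x ≤ t) : outerProb S m x ≤ m t :=
  ciInf_le (f := fun t : {t // t ∈ S ∧ x ≤ t} => m t)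
    ⟨0, by rintro _ ⟨u, rfl⟩; exact h.nonneg u u.2.1⟩ ⟨t, ht, hxt⟩

lemma outerProb_nonneg (h : IsProbOn S m) (x : B) : 0 ≤ outerProb S m x :=
  le_outerProb fun t ht _ => h.nonneg t ht

lemma outerProb_mono (h : IsProbOn S m) (hxy : x ≤ y) : outerProb S m x ≤ outerProb S m y :=
  le_outerProb fun _ ht hyt => h.outerProb_le ht (hxy.trans hyt)

lemma outerProb_eq (h : IsProbOn S m) (hx : x ∈ S) : outerProb S m x = m x :=
  (h.outerProb_le hx le_rfl).antisymm (le_outerProb fun _ ht hxt => h.mono hx ht hxt)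

lemma outerProb_sup (h : IsProbOn S m) (hs : s ∈ S) (hu : u ≤ s) (hv : Disjoint v s) :
    outerProb S m (u ⊔ v) = outerProb S m u + outerProb S m v := by
  refine le_antisymm (le_ciInf_add_ciInf fun t t' => ?_) (le_outerProb fun t ht huvt => ?_)
  · calc outerProb S m (u ⊔ v) ≤ m (t ⊔ t') :=
          h.outerProb_le (S.sup_mem t.2.1 t'.2.1) (sup_le_sup t.2.2 t'.2.2)
      _ ≤ m t + m t' := h.map_sup_le t.2.1 t'.2.1
  · have hut : u ≤ t ⊓ s := le_inf (le_sup_left.trans huvt) hu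
    have hvt : v ≤ t \ s := le_sdiff.2 ⟨le_sup_right.trans huvt, hv⟩
    rw [← h.additive.map_inf_add_map_sdiff ht hs]
    exact add_le_add (h.outerProb_le (S.inf_mem ht hs) hut)
      (h.outerProb_le (S.sdiff_mem ht hs) hvt)

lemma isAdditiveOn_outerProb_inf (h : IsProbOn S m) (b : B) :
    IsAdditiveOn S fun x => outerProb S m (x ⊓ b) := fun x hx y _ hxy => by
  simp only [inf_sup_right]
  exact h.outerProb_sup hx inf_le_left (hxy.symm.mono_left inf_le_left)

lemma outerProb_sup_sub (h : IsProbOn S m) (ht : t ∈ S) (b : B) :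
    outerProb S m (t ⊔ b) - outerProb S m b = m t - outerProb S m (t ⊓ b) := by
  have hsup := h.outerProb_sup ht le_rfl (disjoint_sdiff_self_left (y := b))
  have hb := h.outerProb_sup (u := b ⊓ t) ht inf_le_right (disjoint_sdiff_self_left (y := b))
  rw [sup_sdiff_self_right, h.outerProb_eq ht] at hsup
  rw [sup_inf_sdiff, inf_comm] at hb
  linarith

end IsProbOn

namespace BooleanSubalgebra

def piecewise (S : BooleanSubalgebra B) (b : B) : BoundedLatticeHom (S × S) B where
  toFun p := ((p.1 : B) ⊓ b) ⊔ ((p.2 : B) ⊓ bᶜ)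
  map_sup' p q := by
    simp only [Prod.fst_sup, Prod.snd_sup, val_sup, inf_sup_right]
    exact sup_sup_sup_comm _ _ _ _
  map_inf' p q := by
    simp only [Prod.fst_inf, Prod.snd_inf, val_inf, inf_sup_left, inf_sup_right,
      inf_inf_inf_comm _ b, inf_inf_inf_comm _ bᶜ, inf_idem, inf_compl_self, compl_inf_self,
      inf_bot_eq, bot_sup_eq, sup_bot_eq]
  map_top' := by simp
  map_bot' := by simp

lemma piecewise_apply (S : BooleanSubalgebra B) (b : B) (p : S × S) :
    S.piecewise b p = ((p.1 : B) ⊓ b) ⊔ ((p.2 : B) ⊓ bᶜ) := rfl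

def adjoin (S : BooleanSubalgebra B) (b : B) : BooleanSubalgebra B :=
  (⊤ : BooleanSubalgebra (S × S)).map (S.piecewise b)

lemma le_adjoin (S : BooleanSubalgebra B) (b : B) : S ≤ S.adjoin b :=
  fun x hx => ⟨(⟨x, hx⟩, ⟨x, hx⟩), trivial, sup_inf_inf_compl⟩

lemma mem_adjoin (S : BooleanSubalgebra B) (b : B) : b ∈ S.adjoin b :=
  ⟨(⊤, ⊥), trivial, by simp [piecewise_apply]⟩

end BooleanSubalgebra

/-- Outer measure on the `b`-part plus, in `outerProb S m (x ⊔ b) - outerProb S m b`, the inner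
measure of the `bᶜ`-part (see `IsProbOn.outerProb_sup_sub`). -/
noncomputable def adjoinProb (S : BooleanSubalgebra B) (m : B → ℝ) (b x : B) : ℝ :=
  outerProb S m (x ⊓ b) + (outerProb S m (x ⊔ b) - outerProb S m b)

namespace IsProbOn

lemma adjoinProb_eq (h : IsProbOn S m) (hx : x ∈ S) : adjoinProb S m b x = m x := by
  rw [adjoinProb, h.outerProb_sup_sub hx]
  ring

lemma adjoinProb_piecewise (h : IsProbOn S m) (p : S × S) :
    adjoinProb S m b (S.piecewise b p) =
      outerProb S m ((p.1 : B) ⊓ b) + (m p.2 - outerProb S m ((p.2 : B) ⊓ b)) := by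
  have hinf : S.piecewise b p ⊓ b = (p.1 : B) ⊓ b := by
    simp [BooleanSubalgebra.piecewise_apply, inf_sup_right, inf_assoc]
  have hsup : S.piecewise b p ⊔ b = (p.2 : B) ⊔ b := by
    rw [BooleanSubalgebra.piecewise_apply, sup_assoc, ← sdiff_eq, sdiff_sup_self]
    exact sup_eq_right.2 (inf_le_right.trans le_sup_right)
  rw [adjoinProb, hinf, hsup, h.outerProb_sup_sub p.2.2]

lemma adjoin (h : IsProbOn S m) (b : B) : IsProbOn (S.adjoin b) (adjoinProb S m b) := by
  have hinf := h.isAdditiveOn_outerProb_inf b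
  have hcompl := h.additive.sub hinf
  -- Disjointness in `S.adjoin b` does not lift to `S × S`, so go through modularity.
  have hmod : IsModularOn (S.adjoin b) (adjoinProb S m b) := by
    rintro _ ⟨p, -, rfl⟩ _ ⟨q, -, rfl⟩
    rw [← SupHomClass.map_sup, ← InfHomClass.map_inf]
    simp only [h.adjoinProb_piecewise, Prod.fst_sup, Prod.snd_sup, Prod.fst_inf, Prod.snd_inf,
      BooleanSubalgebra.val_sup, BooleanSubalgebra.val_inf]
    have h1 := hinf.isModularOn _ p.1.2 _ q.1.2
    have h2 := hcompl.isModularOn _ p.2.2 _ q.2.2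
    simp only [Pi.sub_apply] at h1 h2
    linarith
  refine ⟨fun x _ => ?_, ?_, hmod.isAdditiveOn ?_⟩
  · exact add_nonneg (h.outerProb_nonneg _) (sub_nonneg.2 (h.outerProb_mono le_sup_right))
  · rw [h.adjoinProb_eq S.top_mem, h.map_top]
  · rw [h.adjoinProb_eq S.bot_mem, h.map_bot]

lemma exists_extension_finset (h : IsProbOn S m) (F : Finset B) :
    ∃ T : BooleanSubalgebra B, ∃ m' : B → ℝ, IsProbOn T m' ∧ S ≤ T ∧ ↑F ⊆ (T : Set B) ∧
      Set.EqOn m' m S := by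
  classical
  induction F using Finset.induction_on with
  | empty => exact ⟨S, m, h, le_rfl, by simp, fun _ _ => rfl⟩
  | insert b F _ ih =>
    obtain ⟨T, m', hT, hST, hFT, hm'⟩ := ih
    refine ⟨T.adjoin b, adjoinProb T m' b, hT.adjoin b, hST.trans (T.le_adjoin b), ?_,
      fun x hx => (hT.adjoinProb_eq (hST hx)).trans (hm' hx)⟩
    rw [Finset.coe_insert, Set.insert_subset_iff]
    exact ⟨T.mem_adjoin b, hFT.trans (T.le_adjoin b)⟩

open Filter in
lemma exists_extension (h : IsProbOn S m) : ∃ ν : B → ℝ, IsProbOn ⊤ ν ∧ Set.EqOn ν m S := by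
  classical
  choose T μ hT hST hFT hμ using h.exists_extension_finset
  -- Clipping to `[0, 1]` leaves `μ F` unchanged on `T F` and puts the net in a compact cube.
  let f : Finset B → B → ℝ := fun F x => max 0 (min (μ F x) 1)
  have hfμ : ∀ F, ∀ x ∈ T F, f F x = μ F x := fun F x hx => by
    show max 0 (min (μ F x) 1) = μ F x
    rw [min_eq_left ((hT F).le_one hx), max_eq_right ((hT F).nonneg x hx)]
  have hf01 : ∀ F, f F ∈ Set.univ.pi fun _ => Set.Icc (0 : ℝ) 1 := fun F x _ =>
    ⟨le_max_left _ _, max_le zero_le_one (min_le_right _ _)⟩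
  obtain ⟨ν, hν01, hν⟩ := (isCompact_univ_pi fun _ => isCompact_Icc).exists_mapClusterPt
    (f := atTop) (tendsto_principal.2 (Eventually.of_forall hf01))
  have limit : ∀ C : Set (B → ℝ), IsClosed C → (∀ᶠ F in atTop, f F ∈ C) → ν ∈ C :=
    fun C hC hev => hC.mem_of_mapClusterPt hν hev
  refine ⟨ν, ⟨fun x _ => (hν01 x trivial).1, ?_, fun x _ y _ hxy => ?_⟩, fun x hx => ?_⟩
  · exact limit {ν | ν ⊤ = 1} (isClosed_eq (continuous_apply _) continuous_const)
      (Eventually.of_forall fun F => (hfμ F ⊤ (T F).top_mem).trans (hT F).map_top)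
  · refine limit {ν | ν (x ⊔ y) = ν x + ν y}
      (isClosed_eq (continuous_apply _) ((continuous_apply x).add (continuous_apply y))) ?_
    filter_upwards [eventually_ge_atTop {x, y}] with F hF
    have hx : x ∈ T F := hFT F (hF (by simp))
    have hy : y ∈ T F := hFT F (hF (by simp))
    rw [hfμ F _ ((T F).sup_mem hx hy), hfμ F x hx, hfμ F y hy]
    exact (hT F).additive x hx y hy hxy
  · exact limit {ν | ν x = m x} (isClosed_eq (continuous_apply _) continuous_const)
      (Eventually.of_forall fun F => (hfμ F x (hST F hx)).trans (hμ F hx))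

lemma map {A : Type*} [BooleanAlgebra A] {μ : A → ℝ} (hμ : IsProbOn ⊤ μ)
    {e : BoundedLatticeHom A B} (he : Function.Injective e) :
    IsProbOn ((⊤ : BooleanSubalgebra A).map e) (Function.extend e μ 0) where
  nonneg := by
    rintro _ ⟨a, -, rfl⟩
    rw [he.extend_apply]
    exact hμ.nonneg a trivial
  map_top := by rw [← TopHomClass.map_top e, he.extend_apply, hμ.map_top]
  additive := by
    rintro _ ⟨a, -, rfl⟩ _ ⟨a', -, rfl⟩ hd
    have had : Disjoint a a' :=
      disjoint_iff.2 (he (by rw [map_inf, hd.eq_bot, BotHomClass.map_bot e]))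
    rw [← map_sup, he.extend_apply, he.extend_apply, he.extend_apply]
    exact hμ.additive a trivial a' trivial had

end IsProbOn

end

/-- Every finitely additive probability measure on a subalgebra `A` of a
Boolean algebra `B` (here: the image of an injective Boolean-algebra embedding
`e : A → B`) extends to a finitely additive probability measure on `B`. -/
theorem stmt_6 {A B : Type*} [BooleanAlgebra A] [BooleanAlgebra B]
    (e : BoundedLatticeHom A B) (he : Function.Injective e)
    (μ : A → ℝ)
    (hμ0 : ∀ a, 0 ≤ μ a) (hμ1 : μ ⊤ = 1)
    (hμadd : ∀ a b : A, a ⊓ b = ⊥ → μ (a ⊔ b) = μ a + μ b) :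
    ∃ ν : B → ℝ, (∀ b, 0 ≤ ν b) ∧ ν ⊤ = 1 ∧
      (∀ b b' : B, b ⊓ b' = ⊥ → ν (b ⊔ b') = ν b + ν b') ∧
      ∀ a : A, ν (e a) = μ a := by
  have hμ : IsProbOn (⊤ : BooleanSubalgebra A) μ :=
    ⟨fun a _ => hμ0 a, hμ1, fun a _ a' _ h => hμadd a a' h.eq_bot⟩
  obtain ⟨ν, hν, hνμ⟩ := (hμ.map he).exists_extension
  refine ⟨ν, fun x => hν.nonneg x trivial, hν.map_top,
    fun x y h => hν.additive x trivial y trivial (disjoint_iff.2 h), fun a => ?_⟩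
  rw [hνμ (BooleanSubalgebra.mem_map_of_mem e trivial), he.extend_apply]
end

section
/- Let X be a Banach space with norm ‖·‖. If ‖·‖ is measurable with respect to the σ-algebra Ba(X,w) generated by X*, then X* is weak*-separable. -/
/-!
The closed unit ball `{x | ‖x‖ ≤ 1}` is `Ba(X,w)`-measurable, and every `Ba(X,w)`-measurable set
is already measurable for the σ-algebra generated by countably many functionals `fₙ`. Sets of
that σ-algebra are unions of fibres of `x ↦ (fₙ x)ₙ`; as the ball contains no line through `0`,
the `fₙ` separate the points of `X`. By Hahn–Banach in the locally convex weak-* topology, whose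
continuous functionals are the evaluations at points of `X`, a point-separating subspace of `X*`
is weak-* dense. Hence the span of the `fₙ` is a separable weak-* dense subset.
-/

open MeasureTheory

/-- The weak Baire σ-algebra `Ba(X,w)` on a normed space `X`: the σ-algebra generated by
the continuous linear functionals on `X`. -/
noncomputable def weakBaire (X : Type*) [NormedAddCommGroup X] [NormedSpace ℝ X] :
    MeasurableSpace X :=
  ⨆ f : X →L[ℝ] ℝ, MeasurableSpace.comap f (borel ℝ)

namespace MeasurableSpace

theorem exists_countable_measurableSet_biSup {α ι : Type*} {m : ι → MeasurableSpace α}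
    {s : Set α} (hs : MeasurableSet[⨆ i, m i] s) :
    ∃ t : Set ι, t.Countable ∧ MeasurableSet[⨆ i ∈ t, m i] s := by
  rw [measurableSet_iSup] at hs
  induction hs with
  | basic u hu =>
    obtain ⟨i, hi⟩ := hu
    exact ⟨{i}, Set.countable_singleton i,
      le_iSup₂ (f := fun j (_ : j ∈ ({i} : Set ι)) => m j) i rfl _ hi⟩
  | empty => exact ⟨∅, Set.countable_empty, @MeasurableSet.empty _ (⨆ i ∈ (∅ : Set ι), m i)⟩
  | compl u _ ih =>
    obtain ⟨t, ht, hu⟩ := ih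
    exact ⟨t, ht, hu.compl⟩
  | iUnion u _ ih =>
    choose t ht hu using ih
    refine ⟨⋃ n, t n, Set.countable_iUnion ht, MeasurableSet.iUnion fun n => ?_⟩
    have hle : ⨆ i ∈ t n, m i ≤ ⨆ i ∈ ⋃ n, t n, m i :=
      biSup_mono fun i hi => Set.mem_iUnion_of_mem n hi
    exact hle _ (hu n)

theorem mem_iff_mem_of_measurableSet_iSup_comap {α ι : Type*} {β : ι → Type*}
    [mβ : ∀ i, MeasurableSpace (β i)] {g : ∀ i, α → β i} {s : Set α}
    (hs : MeasurableSet[⨆ i, (mβ i).comap (g i)] s) {x y : α} (hxy : ∀ i, g i x = g i y) :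
    x ∈ s ↔ y ∈ s := by
  have hpi : ⨆ i, (mβ i).comap (g i) = MeasurableSpace.pi.comap fun a i => g i a := by
    simp only [MeasurableSpace.pi, comap_iSup, comap_comp]
    rfl
  rw [hpi] at hs
  obtain ⟨S, -, rfl⟩ := hs
  simp only [Set.mem_preimage, funext hxy]

end MeasurableSpace

theorem eq_zero_of_forall_apply_eq_zero_of_measurableSet_closedBall {X : Type*}
    [NormedAddCommGroup X] [NormedSpace ℝ X] {t : Set (X →L[ℝ] ℝ)}
    (ht : MeasurableSet[⨆ f ∈ t, MeasurableSpace.comap f (borel ℝ)] (Metric.closedBall 0 1))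
    {x : X} (hx : ∀ f ∈ t, f x = 0) : x = 0 := by
  rw [iSup_subtype'] at ht
  have hray (c : ℝ) : ‖c • x‖ ≤ 1 := by
    have := (MeasurableSpace.mem_iff_mem_of_measurableSet_iSup_comap ht (x := c • x) (y := 0)
      fun f => by simp [hx f f.2]).2 (Metric.mem_closedBall_self zero_le_one)
    simpa using this
  by_contra hx0
  have hpos : 0 < ‖x‖ := norm_pos_iff.mpr hx0
  have := hray (2 / ‖x‖)
  rw [norm_smul, Real.norm_of_nonneg (by positivity), div_mul_cancel₀ _ hpos.ne'] at this
  norm_num at this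

theorem LinearMap.eq_zero_of_forall_lt_of_mem {𝕜 M : Type*} [Field 𝕜] [Preorder 𝕜]
    [AddCommGroup M] [Module 𝕜 M] (f : M →ₗ[𝕜] 𝕜) {p : Submodule 𝕜 M} {u : 𝕜} (hf : ∀ y ∈ p, f y < u) {x : M} (hx : x ∈ p) :
    f x = 0 := by
  by_contra hfx
  have := hf ((u / f x) • x) (p.smul_mem _ hx)
  rw [map_smul, smul_eq_mul, div_mul_cancel₀ _ hfx] at this
  exact lt_irrefl u this

-- `WeakDual` is a `def`, so it does not inherit this instance from `WeakBilin`.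
instance WeakDual.instLocallyConvexSpace {E : Type*} [AddCommGroup E] [TopologicalSpace E]
    [Module ℝ E] : LocallyConvexSpace ℝ (WeakDual ℝ E) :=
  WeakBilin.locallyConvexSpace (B := topDualPairing ℝ E)

theorem WeakDual.dense_span_of_separating {E : Type*} [AddCommGroup E] [TopologicalSpace E]
    [Module ℝ E] {s : Set (WeakDual ℝ E)} (hs : ∀ x : E, (∀ f ∈ s, f x = 0) → x = 0) :
    Dense (Submodule.span ℝ s : Set (WeakDual ℝ E)) := by
  set S := (Submodule.span ℝ s).topologicalClosure
  rw [Submodule.dense_iff_topologicalClosure_eq_top, Submodule.eq_top_iff']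
  intro f
  by_contra hf
  obtain ⟨φ, u, hφS, hφf⟩ := geometric_hahn_banach_closed_point (E := WeakDual ℝ E)
    S.convex (Submodule.isClosed_topologicalClosure _) hf
  have hφ0 (g) (hg : g ∈ S) : φ g = 0 :=
    (φ : WeakDual ℝ E →ₗ[ℝ] ℝ).eq_zero_of_forall_lt_of_mem hφS hg
  -- Every weak-* continuous functional is the evaluation at some `x : E`.
  obtain ⟨x, rfl⟩ := LinearMap.dualEmbedding_surjective (topDualPairing ℝ E) φ
  obtain rfl : x = 0 :=
    hs x fun g hg => hφ0 g (Submodule.le_topologicalClosure _ (Submodule.subset_span hg))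
  have hu : 0 < u := hφ0 0 S.zero_mem ▸ hφS 0 S.zero_mem
  have hφf0 : WeakBilin.eval (topDualPairing ℝ E) 0 f = 0 := by
    rw [map_zero]
    rfl
  exact (hφf.trans_eq hφf0).not_gt hu

theorem stmt_9_general {X : Type*} [NormedAddCommGroup X] [NormedSpace ℝ X]
    (hmeas : @Measurable X ℝ (weakBaire X) (borel ℝ) (fun x => ‖x‖)) :
    TopologicalSpace.SeparableSpace (WeakDual ℝ X) := by
  have hball : MeasurableSet[weakBaire X] (Metric.closedBall (0 : X) 1) := by
    simpa [Set.preimage, Metric.closedBall] using hmeas (measurableSet_Iic (a := (1 : ℝ)))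
  obtain ⟨t, ht, htball⟩ := MeasurableSpace.exists_countable_measurableSet_biSup hball
  have hdense := WeakDual.dense_span_of_separating (s := StrongDual.toWeakDual '' t)
    fun x hx => eq_zero_of_forall_apply_eq_zero_of_measurableSet_closedBall htball
      fun f hf => hx _ (Set.mem_image_of_mem _ hf)
  exact hdense.isSeparable_iff.mp (ht.image _).isSeparable.span

/-- If the norm of a Banach space `X` is measurable with respect to the
σ-algebra `Ba(X,w)` generated by `X*`, then `X*` is weak*-separable. -/
theorem stmt_9 {X : Type*} [NormedAddCommGroup X] [NormedSpace ℝ X] [CompleteSpace X]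
    (hmeas : @Measurable X ℝ (weakBaire X) (borel ℝ) (fun x => ‖x‖)) :
    TopologicalSpace.SeparableSpace (WeakDual ℝ X) :=
  stmt_9_general hmeas
end

section
/- Let κ be a Kunen cardinal, i.e., P(κ × κ) = P(κ) ⊗ P(κ) as σ-algebras. Then for every n ≥ 1, P(κⁿ) = ⊗ₙ P(κ), i.e., every subset of κⁿ belongs to the n-fold product σ-algebra of the full power-set σ-algebras. -/
/-!
Pulling back along injections, `P(κ) ⊗ P(κ) = P(κ × κ)` gives `P(α) ⊗ P(β) = P(α × β)`
whenever `α` and `β` inject into `κ`. For infinite `κ` the power `κⁿ` injects into `κ`, so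
`P(κⁿ⁺¹) = P(κ) ⊗ P(κⁿ)` and induction on `n` applies. For finite `κ` every subset of `κⁿ`
is a finite union of points, which are measurable rectangles.
-/

open Function

section

variable {α β : Type*} [MeasurableSpace α] [MeasurableSpace β]

theorem DiscreteMeasurableSpace.of_injective [DiscreteMeasurableSpace β] {f : α → β}
    (hf : Measurable f) (hinj : Injective f) : DiscreteMeasurableSpace α :=
  ⟨fun s => hinj.preimage_image s ▸ hf .of_discrete⟩

theorem DiscreteMeasurableSpace.of_prod_self [DiscreteMeasurableSpace (α × α)] :
    DiscreteMeasurableSpace α :=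
  .of_injective (measurable_id.prodMk measurable_id) fun _ _ h => congrArg Prod.fst h

theorem DiscreteMeasurableSpace.prod_of_injective {γ δ : Type*} [MeasurableSpace γ]
    [MeasurableSpace δ] [DiscreteMeasurableSpace α] [DiscreteMeasurableSpace β]
    [DiscreteMeasurableSpace (γ × δ)] {f : α → γ} {g : β → δ} (hf : Injective f)
    (hg : Injective g) : DiscreteMeasurableSpace (α × β) :=
  .of_injective (Measurable.of_discrete.prodMap .of_discrete) (hf.prodMap hg)

end

theorem DiscreteMeasurableSpace.pi_fin_of_prod_self {κ : Type*} [MeasurableSpace κ]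
    [DiscreteMeasurableSpace (κ × κ)] (n : ℕ) : DiscreteMeasurableSpace (Fin n → κ) := by
  have : DiscreteMeasurableSpace κ := .of_prod_self
  rcases finite_or_infinite κ with hκ | hκ
  · infer_instance
  induction n with
  | zero => infer_instance
  | succ n ih =>
    obtain ⟨e⟩ : Nonempty ((Fin n → κ) ↪ κ) := by
      rw [← Cardinal.le_def]
      simpa using Cardinal.power_nat_le (n := n) (Cardinal.aleph0_le_mk κ)
    have : DiscreteMeasurableSpace (κ × (Fin n → κ)) :=
      .prod_of_injective injective_id e.injective
    let split := MeasurableEquiv.piFinSuccAbove (fun _ : Fin (n + 1) => κ) 0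
    exact .of_injective split.measurable split.injective

/-- If `κ` is a Kunen cardinal, i.e. the product σ-algebra
`P(κ) ⊗ P(κ)` (generated as `comap fst ⊤ ⊔ comap snd ⊤`, equivalently by measurable
rectangles) is all of `P(κ × κ)`, then for every `n ≥ 1` the `n`-fold product σ-algebra
`⊗ₙ P(κ)` on `κⁿ` is all of `P(κⁿ)`. -/
theorem stmt_16 (κ : Type*)
    (h : (MeasurableSpace.comap (Prod.fst : κ × κ → κ) (⊤ : MeasurableSpace κ) ⊔
          MeasurableSpace.comap (Prod.snd : κ × κ → κ) (⊤ : MeasurableSpace κ)) =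
          (⊤ : MeasurableSpace (κ × κ))) :
    ∀ n : ℕ, 1 ≤ n →
      (⨆ i : Fin n, MeasurableSpace.comap (fun f : Fin n → κ => f i)
        (⊤ : MeasurableSpace κ)) = (⊤ : MeasurableSpace (Fin n → κ)) := by
  let : MeasurableSpace κ := ⊤
  have : DiscreteMeasurableSpace (κ × κ) := ⟨fun s => h.ge s MeasurableSpace.measurableSet_top⟩
  intro n _
  have := DiscreteMeasurableSpace.pi_fin_of_prod_self (κ := κ) n
  exact eq_top_iff.2 fun s _ => MeasurableSet.of_discrete (s := s)
end

section
/- Let B be a Boolean algebra with a finitely additive probability measure λ, and T ⊆ B⁺ any subset. In the setting where A is the subalgebra of B^ℕ generated by the elements G_b (from an independent family {N_b}), there exists a finitely additive probability measure μ_T on A such that for every finite r ⊆ B⁺: μ_T(⋂_{b∈r} G_b) = λ(⋂_{b∈r} b) if r ⊆ T, and μ_T(⋂_{b∈r} G_b) = 0 otherwise. -/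
/-!
By independence of the `N b`, some ultrafilter `U` on `ℕ` contains `N b` for every `b ∈ T`
and `ℕ \ N b` for every `b ∈ B⁺ \ T`. Then `μ_T a := lim_U lam (a n)` is a finitely additive
probability on all of `B^ℕ`, and for `U`-almost every `n` the value `(⋂_{b∈r} G b) n` is
`⋂_{b∈r} b` if `r ⊆ T` and `⊥` otherwise.
-/

open Filter Topology Set

theorem exists_ultrafilter_mem_and_compl_mem {α β : Type*} (N : α → Set β) (P Q : Set α)
    (h : ∀ s t : Finset α, ↑s ⊆ P → ↑t ⊆ Q → ∃ n, (∀ b ∈ s, n ∈ N b) ∧ ∀ b ∈ t, n ∉ N b) :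
    ∃ U : Ultrafilter β, (∀ b ∈ P, N b ∈ U) ∧ ∀ b ∈ Q, (N b)ᶜ ∈ U := by
  classical
  let f : P ⊕ Q → Set β := Sum.elim (fun b => N b) (fun b => (N b)ᶜ)
  have hfin : ∀ V : Finset (Set β), ↑V ⊆ range f → (⋂₀ (V : Set (Set β))).Nonempty := by
    intro V hV
    rw [← image_univ, Finset.subset_set_image_iff] at hV
    obtain ⟨u, -, rfl⟩ := hV
    obtain ⟨n, hs, ht⟩ := h (u.toLeft.map (Function.Embedding.subtype _))
      (u.toRight.map (Function.Embedding.subtype _)) (by simp) (by simp)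
    refine ⟨n, ?_⟩
    simp only [Finset.coe_image, sInter_image, mem_iInter, Finset.mem_coe]
    rintro (⟨b, hb⟩ | ⟨b, hb⟩) hu
    · exact hs b (by simpa using ⟨hb, hu⟩)
    · exact ht b (by simpa using ⟨hb, hu⟩)
  obtain ⟨U, hU⟩ := Ultrafilter.exists_ultrafilter_of_finite_inter_nonempty (range f) hfin
  exact ⟨U, fun b hb => hU ⟨.inl ⟨b, hb⟩, rfl⟩, fun b hb => hU ⟨.inr ⟨b, hb⟩, rfl⟩⟩

structure IsFinitelyAdditiveProbability {B : Type*} [BooleanAlgebra B] (lam : B → ℝ) : Prop where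
  nonneg : ∀ b, 0 ≤ lam b
  map_top : lam ⊤ = 1
  map_sup_of_inf_eq_bot : ∀ a b, a ⊓ b = ⊥ → lam (a ⊔ b) = lam a + lam b

noncomputable def ultralimit {ι B : Type*} (lam : B → ℝ) (U : Ultrafilter ι) (a : ι → B) : ℝ :=
  limUnder (U : Filter ι) fun i => lam (a i)

namespace IsFinitelyAdditiveProbability

variable {ι B : Type*} [BooleanAlgebra B] {lam : B → ℝ}

theorem map_bot (h : IsFinitelyAdditiveProbability lam) : lam ⊥ = 0 := by
  have := h.map_sup_of_inf_eq_bot ⊥ ⊥ (inf_bot_eq ⊥)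
  rw [sup_bot_eq] at this
  linarith

theorem le_one (h : IsFinitelyAdditiveProbability lam) (b : B) : lam b ≤ 1 := by
  have := h.map_sup_of_inf_eq_bot b bᶜ inf_compl_eq_bot
  rw [sup_compl_eq_top, h.map_top] at this
  linarith [h.nonneg bᶜ]

theorem tendsto_ultralimit (h : IsFinitelyAdditiveProbability lam) (U : Ultrafilter ι)
    (a : ι → B) : Tendsto (fun i => lam (a i)) U (𝓝 (ultralimit lam U a)) := by
  have hIcc : (U.map fun i => lam (a i) : Filter ℝ) ≤ 𝓟 (Icc 0 1) := by
    rw [Ultrafilter.coe_map, le_principal_iff, mem_map]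
    exact univ_mem' fun i => ⟨h.nonneg (a i), h.le_one (a i)⟩
  obtain ⟨x, -, hx⟩ := isCompact_Icc.ultrafilter_le_nhds _ hIcc
  exact tendsto_nhds_limUnder ⟨x, hx⟩

theorem ultralimit_eq_of_eventually_eq (h : IsFinitelyAdditiveProbability lam)
    {U : Ultrafilter ι} {a : ι → B} {c : B} (hc : ∀ᶠ i in U, a i = c) :
    ultralimit lam U a = lam c :=
  tendsto_nhds_unique (h.tendsto_ultralimit U a) <|
    tendsto_const_nhds.congr' <| hc.mono fun _ hi => congrArg lam hi.symm

theorem ultralimit_isFinitelyAdditiveProbability (h : IsFinitelyAdditiveProbability lam)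
    (U : Ultrafilter ι) : IsFinitelyAdditiveProbability (ultralimit lam U) where
  nonneg a := ge_of_tendsto' (h.tendsto_ultralimit U a) fun i => h.nonneg (a i)
  map_top := (h.ultralimit_eq_of_eventually_eq (.of_forall fun _ => rfl)).trans h.map_top
  map_sup_of_inf_eq_bot a b hab :=
    tendsto_nhds_unique (h.tendsto_ultralimit U (a ⊔ b)) <|
      ((h.tendsto_ultralimit U a).add (h.tendsto_ultralimit U b)).congr fun i =>
        (h.map_sup_of_inf_eq_bot (a i) (b i) (congrFun hab i)).symm

end IsFinitelyAdditiveProbability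

theorem stmt_19_general {B : Type*} [BooleanAlgebra B]
    (lam : B → ℝ)
    (hlam0 : ∀ b, 0 ≤ lam b) (hlam1 : lam ⊤ = 1)
    (hlamadd : ∀ a b : B, a ⊓ b = ⊥ → lam (a ⊔ b) = lam a + lam b)
    (N : B → Set ℕ)
    (hindep : ∀ s t : Finset B, (↑s : Set B) ⊆ {b | b ≠ ⊥} → (↑t : Set B) ⊆ {b | b ≠ ⊥} →
      Disjoint s t → ∃ n : ℕ, (∀ b ∈ s, n ∈ N b) ∧ (∀ b ∈ t, n ∉ N b))
    (G : B → (ℕ → B))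
    (hG : ∀ b n, (n ∈ N b → G b n = b) ∧ (n ∉ N b → G b n = ⊥))
    (A : Set (ℕ → B))
    (T : Set B) (hT : T ⊆ {b | b ≠ ⊥}) :
    ∃ μT : (ℕ → B) → ℝ,
      (∀ a ∈ A, 0 ≤ μT a) ∧ μT ⊤ = 1 ∧
      (∀ a ∈ A, ∀ a' ∈ A, a ⊓ a' = ⊥ → μT (a ⊔ a') = μT a + μT a') ∧
      ∀ r : Finset B, (↑r : Set B) ⊆ {b | b ≠ ⊥} →
        ((↑r : Set B) ⊆ T → μT (r.inf G) = lam (r.inf id)) ∧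
        (¬ (↑r : Set B) ⊆ T → μT (r.inf G) = 0) := by
  have hlam : IsFinitelyAdditiveProbability lam := ⟨hlam0, hlam1, hlamadd⟩
  obtain ⟨U, hUT, hUnT⟩ := exists_ultrafilter_mem_and_compl_mem N T {b | b ≠ ⊥ ∧ b ∉ T}
    fun s t hs ht => hindep s t (hs.trans hT) (fun b hb => (ht hb).1)
      (Finset.disjoint_left.2 fun b hbs hbt => (ht hbt).2 (hs hbs))
  have hμ := hlam.ultralimit_isFinitelyAdditiveProbability U
  refine ⟨ultralimit lam U, fun a _ => hμ.nonneg a, hμ.map_top,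
    fun a _ a' _ => hμ.map_sup_of_inf_eq_bot a a', fun r hr => ⟨fun hrT => ?_, fun hrT => ?_⟩⟩
  · refine hlam.ultralimit_eq_of_eventually_eq ?_
    filter_upwards [(eventually_all_finset r).2 fun b hb => hUT b (hrT hb)] with n hn
    rw [Finset.inf_apply]
    exact Finset.inf_congr rfl fun b hb => (hG b n).1 (hn b hb)
  · obtain ⟨b, hbr, hbT⟩ := not_subset.1 hrT
    rw [hlam.ultralimit_eq_of_eventually_eq (c := ⊥), hlam.map_bot]
    filter_upwards [hUnT b ⟨hr hbr, hbT⟩] with n hn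
    rw [Finset.inf_apply, ← le_bot_iff, ← (hG b n).2 hn]
    exact Finset.inf_le hbr

/-- Let `B` be a Boolean algebra with a finitely additive probability
measure `lam`, `{N b : b ≠ ⊥}` an independent family of subsets of `ℕ`, `G b ∈ B^ℕ`
defined by `G b n = b` if `n ∈ N b` and `⊥` otherwise, and `A` the subalgebra of `B^ℕ`
generated by the `G b`. For any `T ⊆ B⁺` there is a finitely additive probability
measure `μ_T` on `A` with `μ_T(⋂_{b∈r} G b) = lam (⋂_{b∈r} b)` when `r ⊆ T`, and `= 0`
otherwise, for every finite `r ⊆ B⁺`. -/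
theorem stmt_19 {B : Type*} [BooleanAlgebra B]
    (lam : B → ℝ)
    (hlam0 : ∀ b, 0 ≤ lam b) (hlam1 : lam ⊤ = 1)
    (hlamadd : ∀ a b : B, a ⊓ b = ⊥ → lam (a ⊔ b) = lam a + lam b)
    (N : B → Set ℕ)
    (hindep : ∀ s t : Finset B, (↑s : Set B) ⊆ {b | b ≠ ⊥} → (↑t : Set B) ⊆ {b | b ≠ ⊥} →
      Disjoint s t → ∃ n : ℕ, (∀ b ∈ s, n ∈ N b) ∧ (∀ b ∈ t, n ∉ N b))
    (G : B → (ℕ → B))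
    (hG : ∀ b n, (n ∈ N b → G b n = b) ∧ (n ∉ N b → G b n = ⊥))
    (A : Set (ℕ → B))
    (hAG : ∀ b : B, b ≠ ⊥ → G b ∈ A)
    (hAtop : (⊤ : ℕ → B) ∈ A) (hAbot : (⊥ : ℕ → B) ∈ A)
    (hAcompl : ∀ a ∈ A, aᶜ ∈ A)
    (hAsup : ∀ a ∈ A, ∀ a' ∈ A, a ⊔ a' ∈ A)
    (hAinf : ∀ a ∈ A, ∀ a' ∈ A, a ⊓ a' ∈ A)
    (hAmin : ∀ S : Set (ℕ → B), (∀ b : B, b ≠ ⊥ → G b ∈ S) → (⊤ : ℕ → B) ∈ S →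
      (⊥ : ℕ → B) ∈ S → (∀ a ∈ S, aᶜ ∈ S) → (∀ a ∈ S, ∀ a' ∈ S, a ⊔ a' ∈ S) →
      (∀ a ∈ S, ∀ a' ∈ S, a ⊓ a' ∈ S) → A ⊆ S)
    (T : Set B) (hT : T ⊆ {b | b ≠ ⊥}) :
    ∃ μT : (ℕ → B) → ℝ,
      (∀ a ∈ A, 0 ≤ μT a) ∧ μT ⊤ = 1 ∧
      (∀ a ∈ A, ∀ a' ∈ A, a ⊓ a' = ⊥ → μT (a ⊔ a') = μT a + μT a') ∧
      ∀ r : Finset B, (↑r : Set B) ⊆ {b | b ≠ ⊥} →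
        ((↑r : Set B) ⊆ T → μT (r.inf G) = lam (r.inf id)) ∧
        (¬ (↑r : Set B) ⊆ T → μT (r.inf G) = 0) :=
  stmt_19_general lam hlam0 hlam1 hlamadd N hindep G hG A T hT
end
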